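/- For m = 2 and b = 1/2, the distribution function P(R↓ < r) = (2/√π) ∫₀^∞ √Z · (r²Z/(4 + r²Z)) e^{-Z} dZ evaluates to 1 - 8/r² + 16√π r^{-3} e^{4/r²} erfc(2/r), where erfc(x) = 1 - (2/√π)∫₀^x e^{-t²} dt. -/

import Mathlib

/-!
With `a = 4 / r²` the integrand is `√Z e^{-Z} - a √Z e^{-Z} / (Z + a)`, and the first part
integrates to `Γ(3/2) = √π / 2`. Writing `1 / (Z + a) = ∫₀^∞ e^{-(Z + a)s} ds` and exchanging
the integrals turns the second part into `Γ(3/2) ∫₀^∞ e^{-as} (1 + s)^{-3/2} ds`. This Laplace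
transform has the explicit primitive
`-2 e^{-as} / √(1 + s) + 2 √(πa) e^a erfc(√(a(1 + s)))`, which vanishes at `+∞` and is
differentiated using `erfc' x = -(2/√π) e^{-x²}`.
-/

open Real MeasureTheory

/-- The complementary error function `erfc(x) = 1 - (2/√π) ∫₀^x e^{-t²} dt`. -/
noncomputable def erfc (x : ℝ) : ℝ :=
  1 - (2 / Real.sqrt π) * ∫ t in (0 : ℝ)..x, Real.exp (-t ^ 2)

open Set Filter Topology

lemma hasDerivAt_erfc (x : ℝ) : HasDerivAt erfc (-(2 / √π) * exp (-x ^ 2)) x := by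
  have hcont : Continuous fun t : ℝ => exp (-t ^ 2) := by fun_prop
  have := intervalIntegral.integral_hasDerivAt_right (hcont.intervalIntegrable 0 x)
    (hcont.stronglyMeasurableAtFilter _ _) hcont.continuousAt
  unfold erfc
  simpa using (this.const_mul (2 / √π)).const_sub 1

lemma tendsto_erfc_atTop : Tendsto erfc atTop (𝓝 0) := by
  have hgauss : IntegrableOn (fun t : ℝ => exp (-t ^ 2)) (Ioi 0) := by
    simpa using (integrable_exp_neg_mul_sq one_pos).integrableOn
  have h := intervalIntegral_tendsto_integral_Ioi 0 hgauss tendsto_id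
  have hval : ∫ t in Ioi (0 : ℝ), exp (-t ^ 2) = √π / 2 := by
    simpa using integral_gaussian_Ioi 1
  rw [hval] at h
  have hπ : √π ≠ 0 := (sqrt_pos.mpr pi_pos).ne'
  unfold erfc
  simpa [hπ] using (h.const_mul (2 / √π)).const_sub 1

lemma integrableOn_sqrt_mul_exp_neg_Ioi :
    IntegrableOn (fun Z => √Z * exp (-Z)) (Ioi 0) := by
  refine (GammaIntegral_convergent (s := 3 / 2) (by norm_num)).congr_fun (fun Z _ => ?_)
    measurableSet_Ioi
  beta_reduce
  rw [show (3 : ℝ) / 2 - 1 = 1 / 2 by norm_num, ← sqrt_eq_rpow, mul_comm]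

lemma integral_sqrt_mul_exp_neg_mul_Ioi {c : ℝ} (hc : 0 < c) :
    ∫ Z in Ioi 0, √Z * exp (-(c * Z)) = √π / (2 * (c * √c)) := by
  have hΓ : Gamma (3 / 2) = √π / 2 := by
    rw [show (3 : ℝ) / 2 = 1 / 2 + 1 by norm_num, Gamma_add_one (by norm_num),
      Gamma_one_half_eq]
    ring
  have hpow : (1 / c) ^ ((3 : ℝ) / 2) = 1 / (c * √c) := by
    rw [div_rpow zero_le_one hc.le, one_rpow, show (3 : ℝ) / 2 = 1 + 1 / 2 by norm_num,
      rpow_add hc, rpow_one, ← sqrt_eq_rpow]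
  have h := integral_rpow_mul_exp_neg_mul_Ioi (a := 3 / 2) (by norm_num) hc
  rw [show (3 : ℝ) / 2 - 1 = 1 / 2 by norm_num, hΓ, hpow] at h
  simp_rw [← sqrt_eq_rpow] at h
  rw [h]
  field_simp

lemma integral_exp_neg_mul_Ioi {c : ℝ} (hc : 0 < c) :
    ∫ s in Ioi (0 : ℝ), exp (-(c * s)) = 1 / c := by
  simpa [neg_mul] using integral_exp_mul_Ioi (neg_neg_iff_pos.mpr hc) 0

lemma hasDerivAt_sqrt_one_add {s : ℝ} (hs : -1 < s) :
    HasDerivAt (fun s => √(1 + s)) (1 / (2 * √(1 + s))) s :=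
  ((hasDerivAt_id' s).const_add 1).sqrt (by linarith)

noncomputable def expDecayPrimitive (a s : ℝ) : ℝ :=
  -2 * exp (-(a * s)) / √(1 + s) + 2 * √π * √a * exp a * erfc (√a * √(1 + s))

lemma hasDerivAt_expDecayPrimitive {a s : ℝ} (ha : 0 ≤ a) (hs : -1 < s) :
    HasDerivAt (expDecayPrimitive a) (exp (-(a * s)) / ((1 + s) * √(1 + s))) s := by
  have hsqrt := hasDerivAt_sqrt_one_add hs
  have hexp : HasDerivAt (fun s => exp (-(a * s))) (-a * exp (-(a * s))) s := by
    simpa [mul_comm] using ((hasDerivAt_id s).const_mul a).neg.exp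
  have herfc := (hasDerivAt_erfc (√a * √(1 + s))).comp s (hsqrt.const_mul √a)
  have h := ((hexp.const_mul (-2)).div hsqrt (sqrt_pos.mpr (by linarith)).ne').add
    (herfc.const_mul (2 * √π * √a * exp a))
  refine h.congr_deriv ?_
  have h1s : √(1 + s) ^ 2 = 1 + s := sq_sqrt (by linarith)
  have hexp_split : exp (-(√a * √(1 + s)) ^ 2) = exp (-(a * s)) / exp a := by
    rw [← exp_sub, mul_pow, sq_sqrt ha, h1s]
    ring_nf
  rw [hexp_split]
  have hπ : √π ≠ 0 := (sqrt_pos.mpr pi_pos).ne'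
  have hu : √(1 + s) ≠ 0 := (sqrt_pos.mpr (by linarith)).ne'
  have hs' : 1 + s ≠ 0 := by linarith
  field_simp
  rw [h1s, sq_sqrt ha]
  ring

lemma tendsto_expDecayPrimitive_atTop {a : ℝ} (ha : 0 < a) :
    Tendsto (expDecayPrimitive a) atTop (𝓝 0) := by
  have hexp : Tendsto (fun s => exp (-(a * s))) atTop (𝓝 0) :=
    tendsto_exp_atBot.comp (tendsto_neg_atTop_atBot.comp (tendsto_id.const_mul_atTop ha))
  have hsqrt : Tendsto (fun s => √(1 + s)) atTop atTop :=
    tendsto_sqrt_atTop.comp (tendsto_atTop_add_const_left _ 1 tendsto_id)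
  have hfirst := (hexp.const_mul (-2)).div_atTop hsqrt
  have hsecond := (tendsto_erfc_atTop.comp (hsqrt.const_mul_atTop (sqrt_pos.mpr ha))).const_mul
    (2 * √π * √a * exp a)
  unfold expDecayPrimitive
  simpa using hfirst.add hsecond

lemma integrableOn_exp_neg_mul_div_one_add_mul_sqrt {a : ℝ} (ha : 0 < a) :
    IntegrableOn (fun s => exp (-(a * s)) / ((1 + s) * √(1 + s))) (Ioi 0) := by
  have hexp : IntegrableOn (fun s => exp (-(a * s))) (Ioi 0) := by
    simpa [neg_mul] using exp_neg_integrableOn_Ioi 0 ha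
  refine hexp.mono' ?_ ?_
  · refine ContinuousOn.aestronglyMeasurable (fun s (hs : 0 < s) => ?_) measurableSet_Ioi
    have : (1 + s) * √(1 + s) ≠ 0 := by positivity
    exact (by fun_prop : Continuous fun s => exp (-(a * s))).continuousWithinAt.div
      (by fun_prop : Continuous fun s => (1 + s) * √(1 + s)).continuousWithinAt this
  · filter_upwards [ae_restrict_mem measurableSet_Ioi] with s (hs : 0 < s)
    have hden : 1 ≤ (1 + s) * √(1 + s) :=
      one_le_mul_of_one_le_of_one_le (by linarith) (one_le_sqrt.mpr (by linarith))
    rw [norm_of_nonneg (by positivity)]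
    exact div_le_self (exp_pos _).le hden

lemma integral_exp_neg_mul_div_one_add_mul_sqrt {a : ℝ} (ha : 0 < a) :
    ∫ s in Ioi 0, exp (-(a * s)) / ((1 + s) * √(1 + s)) =
      2 - 2 * √π * √a * exp a * erfc √a := by
  have hderiv (s : ℝ) (hs : -1 < s) := hasDerivAt_expDecayPrimitive ha.le hs
  rw [integral_Ioi_of_hasDerivAt_of_tendsto
    (hderiv 0 (by norm_num)).continuousAt.continuousWithinAt
    (fun s (hs : 0 < s) => hderiv s (by linarith))
    (integrableOn_exp_neg_mul_div_one_add_mul_sqrt ha) (tendsto_expDecayPrimitive_atTop ha)]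
  simp only [expDecayPrimitive, mul_zero, neg_zero, exp_zero, add_zero, sqrt_one, mul_one]
  ring

lemma integral_sqrt_mul_exp_neg_div_add {a : ℝ} (ha : 0 < a) :
    ∫ Z in Ioi 0, √Z * exp (-Z) / (Z + a) =
      √π / 2 * ∫ s in Ioi 0, exp (-(a * s)) / ((1 + s) * √(1 + s)) := by
  set F : ℝ → ℝ → ℝ := fun Z s => √Z * exp (-Z) * exp (-((Z + a) * s))
  have hF : Integrable (Function.uncurry F)
      ((volume.restrict (Ioi 0)).prod (volume.restrict (Ioi 0))) := by
    have hexp : IntegrableOn (fun s => exp (-(a * s))) (Ioi 0) := by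
      simpa [neg_mul] using exp_neg_integrableOn_Ioi 0 ha
    refine (integrableOn_sqrt_mul_exp_neg_Ioi.mul_prod hexp).mono'
      (by fun_prop : Continuous (Function.uncurry F)).aestronglyMeasurable ?_
    rw [Measure.prod_restrict]
    filter_upwards [ae_restrict_mem (measurableSet_Ioi.prod measurableSet_Ioi)]
      with ⟨Z, s⟩ ⟨(hZ : 0 < Z), (hs : 0 < s)⟩
    simp only [Function.uncurry_apply_pair, F]
    rw [norm_of_nonneg (by positivity)]
    gcongr
    nlinarith
  calc ∫ Z in Ioi 0, √Z * exp (-Z) / (Z + a)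
      = ∫ Z in Ioi 0, ∫ s in Ioi 0, F Z s := by
        refine setIntegral_congr_fun measurableSet_Ioi fun Z (hZ : 0 < Z) => ?_
        rw [integral_const_mul, integral_exp_neg_mul_Ioi (by positivity), mul_one_div]
    _ = ∫ s in Ioi 0, ∫ Z in Ioi 0, F Z s := integral_integral_swap hF
    _ = ∫ s in Ioi 0, (∫ Z in Ioi 0, √Z * exp (-((1 + s) * Z))) * exp (-(a * s)) := by
        refine setIntegral_congr_fun measurableSet_Ioi fun s _ => ?_
        rw [← integral_mul_const]
        refine setIntegral_congr_fun measurableSet_Ioi fun Z _ => ?_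
        simp only [F, mul_assoc, ← exp_add]
        ring_nf
    _ = √π / 2 * ∫ s in Ioi 0, exp (-(a * s)) / ((1 + s) * √(1 + s)) := by
        rw [← integral_const_mul]
        refine setIntegral_congr_fun measurableSet_Ioi fun s (hs : 0 < s) => ?_
        rw [integral_sqrt_mul_exp_neg_mul_Ioi (by linarith)]
        field_simp

lemma integrableOn_sqrt_mul_exp_neg_div_add {a : ℝ} (ha : 0 < a) :
    IntegrableOn (fun Z => √Z * exp (-Z) / (Z + a)) (Ioi 0) := by
  refine (integrableOn_sqrt_mul_exp_neg_Ioi.div_const a).mono' ?_ ?_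
  · refine ContinuousOn.aestronglyMeasurable (fun Z (hZ : 0 < Z) => ?_) measurableSet_Ioi
    exact (by fun_prop : Continuous fun Z => √Z * exp (-Z)).continuousWithinAt.div
      (continuous_id.add continuous_const).continuousWithinAt (by positivity)
  · filter_upwards [ae_restrict_mem measurableSet_Ioi] with Z (hZ : 0 < Z)
    rw [norm_of_nonneg (by positivity)]
    gcongr
    linarith

/-- For `m = 2`, `b = 1/2`, the distribution function
`P(R↓ < r) = (2/√π) ∫₀^∞ √Z (r²Z/(4+r²Z)) e^{-Z} dZ` evaluates to
`1 - 8/r² + 16√π r^{-3} e^{4/r²} erfc(2/r)`. -/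
theorem fpp_distance_distribution_b_half (r : ℝ) (hr : 0 < r) :
    (2 / Real.sqrt π) *
        (∫ Z in Set.Ioi (0 : ℝ),
          Real.sqrt Z * (r ^ 2 * Z / (4 + r ^ 2 * Z)) * Real.exp (-Z)) =
      1 - 8 / r ^ 2 + 16 * Real.sqrt π * r ^ (-3 : ℤ) * Real.exp (4 / r ^ 2) * erfc (2 / r) := by
  set a := 4 / r ^ 2 with ha_def
  have ha : 0 < a := by positivity
  have hsplit : EqOn (fun Z => √Z * (r ^ 2 * Z / (4 + r ^ 2 * Z)) * exp (-Z))
      (fun Z => √Z * exp (-Z) - a * (√Z * exp (-Z) / (Z + a))) (Ioi 0) := by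
    intro Z (hZ : 0 < Z)
    have : 0 < 4 + r ^ 2 * Z := by positivity
    simp only [ha_def]
    field_simp
    ring
  have hsqrt_a : √a = 2 / r := by
    rw [ha_def, show (4 : ℝ) / r ^ 2 = (2 / r) ^ 2 by ring, sqrt_sq (by positivity)]
  have hΓ : ∫ Z in Ioi 0, √Z * exp (-Z) = √π / 2 := by
    simpa using integral_sqrt_mul_exp_neg_mul_Ioi one_pos
  rw [setIntegral_congr_fun measurableSet_Ioi hsplit,
    integral_sub integrableOn_sqrt_mul_exp_neg_Ioi
      ((integrableOn_sqrt_mul_exp_neg_div_add ha).const_mul a), integral_const_mul, hΓ,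
    integral_sqrt_mul_exp_neg_div_add ha, integral_exp_neg_mul_div_one_add_mul_sqrt ha, hsqrt_a,
    zpow_neg, ha_def]
  have hπ : √π ≠ 0 := (sqrt_pos.mpr pi_pos).ne'
  field_simp
  ring
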